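/- arXiv:2505.11850 — 5 statements merged into one kernel-verified Lean document; each statement's English description precedes it below -/
import Mathlib

section
/- Let a, b be positive real numbers with a ≠ b and let L be a real number. If L ≠ 1, then there exists exactly one positive real number λ satisfying (λ + a)(λ − b) = L·(λ − a)(λ + b). If L = 1, then no positive real number λ satisfies (λ + a)(λ − b) = L·(λ − a)(λ + b). -/
/-- Key algebraic step of part 2 of Theorem 3.2: for `L ≠ 1` the equation
`(λ+a)(λ−b) = L(λ−a)(λ+b)` has exactly one positive solution; for `L = 1` it has none. -/
theorem stmt_4 (a b : ℝ) (ha : 0 < a) (hb : 0 < b) (hab : a ≠ b) (L : ℝ) :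
    (L ≠ 1 →
      ∃! lam : ℝ, 0 < lam ∧ (lam + a) * (lam - b) = L * (lam - a) * (lam + b)) ∧
    (L = 1 →
      ¬ ∃ lam : ℝ, 0 < lam ∧ (lam + a) * (lam - b) = L * (lam - a) * (lam + b)) := by
  constructor
  · intro hL
    have hk : (1 : ℝ) - L ≠ 0 := sub_ne_zero.mpr (Ne.symm hL)
    obtain ⟨c, hcc⟩ : ∃ c : ℝ, (1 - L) * c = (a - b) * (1 + L) :=
      ⟨(a - b) * (1 + L) / (1 - L), by field_simp⟩
    -- equivalence with the monic quadratic
    have hequiv : ∀ lam : ℝ,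
        (lam + a) * (lam - b) = L * (lam - a) * (lam + b) ↔
        lam ^ 2 + c * lam - a * b = 0 := by
      intro lam
      constructor
      · intro h
        have h2 : (1 - L) * (lam ^ 2 + c * lam - a * b) = 0 := by
          linear_combination h + lam * hcc
        rcases mul_eq_zero.mp h2 with h3 | h3
        · exact absurd h3 hk
        · exact h3
      · intro h
        have h2 : (1 - L) * (lam ^ 2 + c * lam - a * b) = 0 :=
          mul_eq_zero_of_right _ h
        linear_combination h2 - lam * hcc
    have hD : (0:ℝ) < c ^ 2 + 4 * (a * b) := by positivity
    set s : ℝ := Real.sqrt (c ^ 2 + 4 * (a * b)) with hs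
    have hs2 : s ^ 2 = c ^ 2 + 4 * (a * b) := Real.sq_sqrt hD.le
    have hsc : |c| < s := by
      have h1 : |c| ^ 2 < s ^ 2 := by rw [hs2, sq_abs]; nlinarith
      exact lt_of_pow_lt_pow_left₀ 2 (Real.sqrt_nonneg _) h1
    have hsc' : -c < s ∧ c < s := abs_lt.mp hsc |>.imp neg_lt.mp id
    refine ⟨(-c + s) / 2, ⟨by linarith [hsc'.1], ?_⟩, ?_⟩
    · rw [hequiv]; nlinarith [hs2]
    · rintro y ⟨hy, hyeq⟩
      rw [hequiv] at hyeq
      have hroot : ((-c + s) / 2) ^ 2 + c * ((-c + s) / 2) - a * b = 0 := by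
        nlinarith [hs2]
      have hfac : (y - (-c + s) / 2) * (y + (-c + s) / 2 + c) = 0 := by
        nlinarith [hyeq, hroot]
      rcases mul_eq_zero.mp hfac with h | h
      · linarith
      · exfalso
        have : y + (-c + s) / 2 + c > 0 := by
          have : (c + s) / 2 ≥ 0 := by linarith [hsc'.2]
          linarith
        linarith
  · rintro hL ⟨lam, hlam, heq⟩
    subst hL
    have : 2 * (a - b) * lam = 0 := by nlinarith [heq]
    have hab' : a - b ≠ 0 := sub_ne_zero.mpr hab
    rcases mul_eq_zero.mp this with h | h
    · rcases mul_eq_zero.mp h with h | h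
      · norm_num at h
      · exact hab' h
    · linarith
end

section
/- Let a₁, a₂, a₃ be positive real numbers with a₂ ≠ a₃, and let λ, λ* be positive real numbers with λ ≠ a₁ and λ* ≠ a₁. Then it is impossible that for both j = 2 and j = 3 one has (λ − a_j)(λ + a₁)(λ* + a_j)(λ* − a₁) = −(λ* − a_j)(λ* + a₁)(λ + a_j)(λ − a₁). -/
/-- Pseudo-solution elimination in the proof of Theorem 4.1: a spurious common solution
`λ*` of the sign-flipped reflection-ratio relations for both `j = 2` and `j = 3`
cannot exist. -/
theorem stmt_5 (a₁ a₂ a₃ : ℝ) (ha₁ : 0 < a₁) (ha₂ : 0 < a₂) (ha₃ : 0 < a₃)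
    (h23 : a₂ ≠ a₃) (lam lamStar : ℝ) (hlam : 0 < lam) (hlamStar : 0 < lamStar)
    (hne : lam ≠ a₁) (hneStar : lamStar ≠ a₁) :
    ¬ (((lam - a₂) * (lam + a₁) * ((lamStar + a₂) * (lamStar - a₁)) =
         -((lamStar - a₂) * (lamStar + a₁) * ((lam + a₂) * (lam - a₁)))) ∧
       ((lam - a₃) * (lam + a₁) * ((lamStar + a₃) * (lamStar - a₁)) =
         -((lamStar - a₃) * (lamStar + a₁) * ((lam + a₃) * (lam - a₁))))) := by
  rintro ⟨h2, h3⟩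
  have k2 : (lam * lamStar - a₁ ^ 2) * (lam * lamStar - a₂ ^ 2)
      = a₁ * a₂ * (lam - lamStar) ^ 2 := by linear_combination (1/2) * h2
  have k3 : (lam * lamStar - a₁ ^ 2) * (lam * lamStar - a₃ ^ 2)
      = a₁ * a₃ * (lam - lamStar) ^ 2 := by linear_combination (1/2) * h3
  by_cases hc : lam * lamStar - a₁ ^ 2 = 0
  · rw [hc, zero_mul] at k2
    have hsq : (lam - lamStar) ^ 2 = 0 := by
      have := mul_pos ha₁ ha₂
      nlinarith [sq_nonneg (lam - lamStar)]
    have hll : lam = lamStar := by nlinarith [sq_nonneg (lam - lamStar)]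
    apply hne
    nlinarith [hll ▸ hc]
  · have key : (lam * lamStar - a₁ ^ 2) * ((lam * lamStar + a₂ * a₃) * (a₃ - a₂)) = 0 := by
      linear_combination a₃ * k2 - a₂ * k3
    rcases mul_eq_zero.mp key with h | h
    · exact hc h
    rcases mul_eq_zero.mp h with h | h
    · nlinarith [mul_pos hlam hlamStar, mul_pos ha₂ ha₃]
    · exact h23 (by linarith)
end

section
/- Let c ∈ (0, 1] and define f : {L ∈ ℝ : L ≠ 1} → ℝ by f(L) = (1/2)(√((p(L))² + 4c) − p(L)), where p(L) = ((1 + L)/(1 − L))(1 − c). Then f is differentiable at every L ≠ 1 and its derivative satisfies |f'(L)| ≤ 2(1 − c)/(1 − L)². -/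
/-!
`f = ρ_c ∘ p`, where `ρ_c x = (√(x² + 4c) − x)/2` is the positive root of `λ² + xλ − c`.
Since `|x| ≤ √(x² + 4c)`, the derivative `ρ_c' x = (x/√(x² + 4c) − 1)/2` has absolute value at
most `1`, while `p' L = 2(1 − c)/(1 − L)² ≥ 0`; the chain rule gives the bound.
-/

open Real

noncomputable def positiveRoot (c x : ℝ) : ℝ := (1 / 2) * (√(x ^ 2 + 4 * c) - x)

theorem abs_div_sqrt_sq_add_le_one {c : ℝ} (hc : 0 ≤ c) (x : ℝ) : |x / √(x ^ 2 + c)| ≤ 1 := by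
  rw [abs_div, abs_of_nonneg (sqrt_nonneg _)]
  refine div_le_one_of_le₀ ?_ (sqrt_nonneg _)
  rw [← sqrt_sq_eq_abs]
  exact sqrt_le_sqrt (by linarith)

theorem hasDerivAt_positiveRoot {c : ℝ} (hc : 0 < c) (x : ℝ) :
    HasDerivAt (positiveRoot c) ((1 / 2) * (x / √(x ^ 2 + 4 * c) - 1)) x := by
  have hpos : x ^ 2 + 4 * c ≠ 0 := by positivity
  have hsq : HasDerivAt (fun y => y ^ 2 + 4 * c) (2 * x) x := by
    simpa using (hasDerivAt_pow 2 x).add_const (4 * c)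
  have h := ((hsq.sqrt hpos).sub (hasDerivAt_id' x)).const_mul (1 / 2)
  refine h.congr_deriv ?_
  field_simp

theorem abs_deriv_positiveRoot_le_one {c : ℝ} (hc : 0 ≤ c) (x : ℝ) :
    |(1 / 2) * (x / √(x ^ 2 + 4 * c) - 1)| ≤ 1 := by
  have h := abs_le.mp (abs_div_sqrt_sq_add_le_one (by positivity : 0 ≤ 4 * c) x)
  rw [abs_le]
  constructor <;> linarith [h.1, h.2]

theorem hasDerivAt_one_add_div_one_sub {L : ℝ} (hL : L ≠ 1) :
    HasDerivAt (fun L : ℝ => (1 + L) / (1 - L)) (2 / (1 - L) ^ 2) L := by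
  have h1L : 1 - L ≠ 0 := sub_ne_zero.mpr hL.symm
  refine (((hasDerivAt_id' L).const_add 1).div ((hasDerivAt_id' L).const_sub 1) h1L).congr_deriv ?_
  ring

/-- Stability estimate (4.11): the positive root `λ⁽¹⁾` as a function of the data
ratio `L` is differentiable for `L ≠ 1` with `|dλ⁽¹⁾/dL| ≤ 2(1−c)/(1−L)²`. -/
theorem stmt_7 (c : ℝ) (hc : c ∈ Set.Ioc (0 : ℝ) 1)
    (p f : ℝ → ℝ)
    (hp : ∀ L : ℝ, p L = ((1 + L) / (1 - L)) * (1 - c))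
    (hf : ∀ L : ℝ, f L = (1 / 2) * (Real.sqrt ((p L) ^ 2 + 4 * c) - p L)) :
    ∀ L : ℝ, L ≠ 1 →
      DifferentiableAt ℝ f L ∧ |deriv f L| ≤ 2 * (1 - c) / (1 - L) ^ 2 := by
  obtain ⟨hc0, hc1⟩ := hc
  intro L hL
  have hf_comp : f = positiveRoot c ∘ p := funext hf
  have hp_deriv : HasDerivAt p (2 / (1 - L) ^ 2 * (1 - c)) L := by
    rw [funext hp]
    exact (hasDerivAt_one_add_div_one_sub hL).mul_const _
  have hf_deriv := hf_comp ▸ (hasDerivAt_positiveRoot hc0 (p L)).comp L hp_deriv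
  refine ⟨hf_deriv.differentiableAt, ?_⟩
  have hp'_nonneg : 0 ≤ 2 / (1 - L) ^ 2 * (1 - c) := by
    have : 0 ≤ 1 - c := by linarith
    positivity
  calc |deriv f L|
      = |(1 / 2) * (p L / √(p L ^ 2 + 4 * c) - 1)| * (2 / (1 - L) ^ 2 * (1 - c)) := by
        rw [hf_deriv.deriv, abs_mul, abs_of_nonneg hp'_nonneg]
    _ ≤ 1 * (2 / (1 - L) ^ 2 * (1 - c)) :=
        mul_le_mul_of_nonneg_right (abs_deriv_positiveRoot_le_one hc0.le _) hp'_nonneg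
    _ = 2 * (1 - c) / (1 - L) ^ 2 := by ring
end

section
/- Let 0 < k₋ ≤ k⁺, let u : ℝ → ℂ be measurable, let A ∈ ℂ, τ ∈ ℝ and C > 0, and assume |u(k) − A·exp(i k τ)| ≤ C/k for all k ∈ [k₋, k⁺]. Then |∫_{k₋}^{k⁺} u(k)·exp(−i k τ)·k^{−1/2} dk − 2A(√(k⁺) − √(k₋))| ≤ 2C/√(k₋). -/
/-!
Multiplying by `exp (-i k τ) k^(-1/2)` turns the leading term `A exp (i k τ)` into
`A k^(-1/2)`, whose integral is `2 A (√k⁺ - √k₋)`, while the `O(1/k)` remainder becomes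
`O(k^(-3/2))`, whose integral over `[k₋, k⁺]` is at most `2 / √k₋`.
-/

open MeasureTheory Set
open scoped Interval

theorem intervalIntegral.norm_integral_sub_le_of_norm_sub_le {E : Type*} [NormedAddCommGroup E]
    [NormedSpace ℝ E] {f g : ℝ → E} {h : ℝ → ℝ} {a b : ℝ} (hab : a ≤ b)
    (hf : AEStronglyMeasurable f (volume.restrict (Ι a b)))
    (hg : IntervalIntegrable g volume a b) (hh : IntervalIntegrable h volume a b)
    (hfg : ∀ x ∈ Icc a b, ‖f x - g x‖ ≤ h x) :
    ‖(∫ x in a..b, f x) - ∫ x in a..b, g x‖ ≤ ∫ x in a..b, h x := by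
  have hfg' : ∀ᵐ x ∂volume, x ∈ Ioc a b → ‖f x - g x‖ ≤ h x :=
    ae_of_all _ fun x hx => hfg x (Ioc_subset_Icc_self hx)
  have hsub : IntervalIntegrable (fun x => f x - g x) volume a b := by
    refine hh.mono_fun (hf.sub hg.def'.aestronglyMeasurable) ?_
    rw [uIoc_of_le hab]
    filter_upwards [(ae_restrict_iff' measurableSet_Ioc).2 hfg'] with x hx
    exact hx.trans (le_abs_self _)
  have hfi : IntervalIntegrable f volume a b := by simpa using hsub.add hg
  rw [← intervalIntegral.integral_sub hfi hg]
  exact intervalIntegral.norm_integral_le_of_norm_le hab hfg' hh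

theorem integral_rpow_neg_one_half (a b : ℝ) :
    ∫ x in a..b, x ^ (-(1 / 2 : ℝ)) = 2 * (√b - √a) := by
  rw [integral_rpow (Or.inl (by norm_num)), Real.sqrt_eq_rpow, Real.sqrt_eq_rpow]
  norm_num
  ring

theorem integral_rpow_neg_three_halves_le {a b : ℝ} (ha : 0 < a) (hab : a ≤ b) :
    ∫ x in a..b, x ^ (-(3 / 2 : ℝ)) ≤ 2 / √a := by
  have h0 : (0 : ℝ) ∉ [[a, b]] := notMem_uIcc_of_lt ha (ha.trans_le hab)
  have hb : 0 ≤ b ^ (-(1 / 2 : ℝ)) := Real.rpow_nonneg (ha.le.trans hab) _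
  rw [integral_rpow (Or.inr ⟨by norm_num, h0⟩), Real.sqrt_eq_rpow, div_eq_mul_inv (2 : ℝ),
    ← Real.rpow_neg ha.le]
  norm_num
  linarith

theorem Complex.norm_mul_exp_neg_sub {z : ℂ} (hz : z.re = 0) (u A : ℂ) :
    ‖u * exp (-z) - A‖ = ‖u - A * exp z‖ := by
  have hexp : u * exp (-z) - A = (u - A * exp z) * exp (-z) := by
    rw [sub_mul, mul_assoc, ← exp_add, add_neg_cancel, exp_zero, mul_one]
  rw [hexp, norm_mul, norm_exp, neg_re, hz, neg_zero, Real.exp_zero, mul_one]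

theorem norm_mul_exp_neg_mul_rpow_sub_le {u A : ℂ} {k τ C : ℝ} (hk : 0 < k)
    (h : ‖u - A * Complex.exp (Complex.I * k * τ)‖ ≤ C / k) :
    ‖u * Complex.exp (-(Complex.I * k * τ)) * ((k ^ (-(1 / 2 : ℝ)) : ℝ) : ℂ) -
        A * ((k ^ (-(1 / 2 : ℝ)) : ℝ) : ℂ)‖ ≤ C * k ^ (-(3 / 2 : ℝ)) := by
  have hw : 0 < k ^ (-(1 / 2 : ℝ)) := Real.rpow_pos_of_pos hk _
  rw [← sub_mul, norm_mul, Complex.norm_real, Real.norm_of_nonneg hw.le,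
    Complex.norm_mul_exp_neg_sub (by simp)]
  calc ‖u - A * Complex.exp (Complex.I * k * τ)‖ * k ^ (-(1 / 2 : ℝ))
      ≤ C / k * k ^ (-(1 / 2 : ℝ)) := mul_le_mul_of_nonneg_right h hw.le
    _ = C * k ^ (-(3 / 2 : ℝ)) := by
      rw [div_eq_mul_inv, ← Real.rpow_neg_one k, mul_assoc, ← Real.rpow_add hk]
      norm_num

theorem stmt_8_general (kminus kplus : ℝ) (hk : 0 < kminus) (hkk : kminus ≤ kplus)
    (u : ℝ → ℂ) (hu : Measurable u) (A : ℂ) (τ C : ℝ)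
    (h : ∀ k ∈ Set.Icc kminus kplus, ‖u k - A * Complex.exp (Complex.I * k * τ)‖ ≤ C / k) :
    ‖(∫ k in kminus..kplus,
          u k * Complex.exp (-(Complex.I * k * τ)) * ((k ^ (-(1 / 2 : ℝ)) : ℝ) : ℂ)) -
        2 * A * ((Real.sqrt kplus - Real.sqrt kminus : ℝ) : ℂ)‖ ≤
      2 * C / Real.sqrt kminus := by
  have hC : 0 ≤ C := by
    simpa using (le_div_iff₀ hk).1 ((norm_nonneg _).trans (h kminus ⟨le_rfl, hkk⟩))
  have h0 : (0 : ℝ) ∉ [[kminus, kplus]] := notMem_uIcc_of_lt hk (hk.trans_le hkk)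
  have hw : ContinuousOn (fun k : ℝ => k ^ (-(1 / 2 : ℝ))) [[kminus, kplus]] :=
    continuousOn_id.rpow_const fun k hk' => Or.inl (ne_of_mem_of_not_mem hk' h0)
  have hmain : (∫ k in kminus..kplus, A * ((k ^ (-(1 / 2 : ℝ)) : ℝ) : ℂ)) =
      2 * A * ((Real.sqrt kplus - Real.sqrt kminus : ℝ) : ℂ) := by
    rw [intervalIntegral.integral_const_mul, intervalIntegral.integral_ofReal,
      integral_rpow_neg_one_half]
    push_cast
    ring
  rw [← hmain]
  calc _ ≤ ∫ k in kminus..kplus, C * k ^ (-(3 / 2 : ℝ)) :=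
        intervalIntegral.norm_integral_sub_le_of_norm_sub_le hkk
          (by fun_prop) (continuousOn_const.mul
            (Complex.continuous_ofReal.comp_continuousOn hw)).intervalIntegrable
          ((intervalIntegral.intervalIntegrable_rpow (Or.inr h0)).const_mul C)
          fun k hk' => norm_mul_exp_neg_mul_rpow_sub_le (hk.trans_le hk'.1) (h k hk')
    _ = C * ∫ k in kminus..kplus, k ^ (-(3 / 2 : ℝ)) := intervalIntegral.integral_const_mul _ _
    _ ≤ C * (2 / Real.sqrt kminus) :=
        mul_le_mul_of_nonneg_left (integral_rpow_neg_three_halves_le hk hkk) hC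
    _ = 2 * C / Real.sqrt kminus := by ring

/-- On-line case of Proposition 4.1 in dimension `n = 2`, in abstract form. -/
theorem stmt_8 (kminus kplus : ℝ) (hk : 0 < kminus) (hkk : kminus ≤ kplus)
    (u : ℝ → ℂ) (hu : Measurable u) (A : ℂ) (τ C : ℝ) (hC : 0 < C)
    (h : ∀ k ∈ Set.Icc kminus kplus, ‖u k - A * Complex.exp (Complex.I * k * τ)‖ ≤ C / k) :
    ‖(∫ k in kminus..kplus,
          u k * Complex.exp (-(Complex.I * k * τ)) * ((k ^ (-(1 / 2 : ℝ)) : ℝ) : ℂ)) -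
        2 * A * ((Real.sqrt kplus - Real.sqrt kminus : ℝ) : ℂ)‖ ≤
      2 * C / Real.sqrt kminus :=
  stmt_8_general kminus kplus hk hkk u hu A τ C h
end

section
/- Let 0 < k₋ ≤ k⁺, let u : ℝ → ℂ be measurable, let A ∈ ℂ, τ, t ∈ ℝ with t ≠ τ, and C > 0, and assume |u(k) − A·exp(i k τ)| ≤ C/k for all k ∈ [k₋, k⁺]. Then |∫_{k₋}^{k⁺} u(k)·exp(−i k t) dk| ≤ 2|A|/|t − τ| + C·log(k⁺/k₋). -/
open MeasureTheory

/-! The integrand is `A·exp(i(τ - t)k)` plus an error of size at most `C/k`. The oscillatory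
main term integrates to `A·(e^{i(τ-t)k⁺} - e^{i(τ-t)k₋})/(i(τ - t))`, of norm at most
`2|A|/|t - τ|`, and the error integrates to at most `∫ C/k = C log(k⁺/k₋)`. -/

theorem norm_integral_exp_I_mul_le (a b s : ℝ) (hs : s ≠ 0) :
    ‖∫ k in a..b, Complex.exp (Complex.I * s * k)‖ ≤ 2 / |s| := by
  have hc : Complex.I * s ≠ 0 := mul_ne_zero Complex.I_ne_zero (Complex.ofReal_ne_zero.mpr hs)
  have hunit (x : ℝ) : ‖Complex.exp (Complex.I * s * x)‖ = 1 := by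
    rw [mul_assoc, ← Complex.ofReal_mul, Complex.norm_exp_I_mul_ofReal]
  rw [integral_exp_mul_complex hc, norm_div, norm_mul, Complex.norm_I, Complex.norm_real,
    Real.norm_eq_abs, one_mul]
  gcongr
  calc ‖Complex.exp (Complex.I * s * b) - Complex.exp (Complex.I * s * a)‖
      ≤ ‖Complex.exp (Complex.I * s * b)‖ + ‖Complex.exp (Complex.I * s * a)‖ := norm_sub_le _ _
    _ = 2 := by rw [hunit, hunit]; norm_num

theorem integral_const_div_self {a b : ℝ} (ha : 0 < a) (hb : 0 < b) (C : ℝ) :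
    ∫ k in a..b, C / k = C * Real.log (b / a) := by
  simp only [div_eq_mul_inv C, intervalIntegral.integral_const_mul, integral_inv_of_pos ha hb]

theorem intervalIntegrable_const_div_self {a b : ℝ} (ha : 0 < a) (hb : 0 < b) (C : ℝ) :
    IntervalIntegrable (fun k => C / k) volume a b := by
  refine (continuousOn_const.div continuousOn_id fun x hx => ?_).intervalIntegrable
  exact ((lt_min ha hb).trans_le hx.1).ne'

theorem norm_integral_le_norm_integral_add_of_norm_sub_le {E : Type*} [NormedAddCommGroup E]
    [NormedSpace ℝ E] {f g : ℝ → E} {bound : ℝ → ℝ} {a b : ℝ} (hab : a ≤ b)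
    (hf : AEStronglyMeasurable f (volume.restrict (Set.uIoc a b)))
    (hg : IntervalIntegrable g volume a b) (hbound : IntervalIntegrable bound volume a b)
    (h : ∀ k ∈ Set.Icc a b, ‖f k - g k‖ ≤ bound k) :
    ‖∫ k in a..b, f k‖ ≤ ‖∫ k in a..b, g k‖ + ∫ k in a..b, bound k := by
  have hle : ∀ᵐ k ∂volume, k ∈ Set.Ioc a b → ‖f k - g k‖ ≤ bound k :=
    Filter.Eventually.of_forall fun k hk => h k (Set.Ioc_subset_Icc_self hk)
  have hdiff : IntervalIntegrable (f - g) volume a b := by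
    refine hbound.mono_fun' (hf.sub hg.def'.aestronglyMeasurable) ?_
    rw [Set.uIoc_of_le hab]
    exact (ae_restrict_iff' measurableSet_Ioc).mpr hle
  have hsplit : ∫ k in a..b, f k = (∫ k in a..b, g k) + ∫ k in a..b, (f - g) k := by
    rw [← intervalIntegral.integral_add hg hdiff]
    simp
  rw [hsplit]
  exact (norm_add_le _ _).trans
    (add_le_add_right (intervalIntegral.norm_integral_le_of_norm_le hab hle hbound) _)

theorem stmt_11_general (kminus kplus : ℝ) (hk : 0 < kminus) (hkk : kminus ≤ kplus)
    (u : ℝ → ℂ) (hu : Measurable u) (A : ℂ) (τ t C : ℝ) (ht : t ≠ τ)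
    (h : ∀ k ∈ Set.Icc kminus kplus, ‖u k - A * Complex.exp (Complex.I * k * τ)‖ ≤ C / k) :
    ‖∫ k in kminus..kplus, u k * Complex.exp (-(Complex.I * k * t))‖ ≤
      2 * ‖A‖ / |t - τ| + C * Real.log (kplus / kminus) := by
  have hkplus : 0 < kplus := hk.trans_le hkk
  have herror (k : ℝ) : u k * Complex.exp (-(Complex.I * k * t))
      - A * Complex.exp (Complex.I * (τ - t : ℝ) * k)
      = (u k - A * Complex.exp (Complex.I * k * τ)) * Complex.exp (-(Complex.I * k * t)) := by
    rw [sub_mul, mul_assoc A, ← Complex.exp_add]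
    push_cast
    ring_nf
  have hmain : ‖∫ k in kminus..kplus, A * Complex.exp (Complex.I * (τ - t : ℝ) * k)‖
      ≤ 2 * ‖A‖ / |t - τ| := by
    rw [intervalIntegral.integral_const_mul, norm_mul, mul_comm 2, mul_div_assoc, abs_sub_comm]
    gcongr
    exact norm_integral_exp_I_mul_le _ _ _ (sub_ne_zero.mpr ht.symm)
  have hg : Continuous fun k : ℝ => A * Complex.exp (Complex.I * (τ - t : ℝ) * k) := by fun_prop
  calc _ ≤ ‖∫ k in kminus..kplus, A * Complex.exp (Complex.I * (τ - t : ℝ) * k)‖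
        + ∫ k in kminus..kplus, C / k := by
        refine norm_integral_le_norm_integral_add_of_norm_sub_le hkk
          (by fun_prop : Measurable _).aestronglyMeasurable (hg.intervalIntegrable _ _)
          (intervalIntegrable_const_div_self hk hkplus C) fun k hk' => ?_
        rw [herror, norm_mul, Complex.norm_exp]
        simpa using h k hk'
    _ ≤ _ := by
        rw [integral_const_div_self hk hkplus]
        exact add_le_add_left hmain _

/-- Off-line case of Proposition 4.1 in dimension `n = 3`, in abstract form. -/
theorem stmt_11 (kminus kplus : ℝ) (hk : 0 < kminus) (hkk : kminus ≤ kplus)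
    (u : ℝ → ℂ) (hu : Measurable u) (A : ℂ) (τ t C : ℝ) (ht : t ≠ τ) (hC : 0 < C)
    (h : ∀ k ∈ Set.Icc kminus kplus, ‖u k - A * Complex.exp (Complex.I * k * τ)‖ ≤ C / k) :
    ‖∫ k in kminus..kplus, u k * Complex.exp (-(Complex.I * k * t))‖ ≤
      2 * ‖A‖ / |t - τ| + C * Real.log (kplus / kminus) :=
  stmt_11_general kminus kplus hk hkk u hu A τ t C ht h
end
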